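/- Let p be a prime, f, g : F_p^n → ℂ, and let 𝓛 be a system of linear forms over F_p. Then the derivative at t = 0 of the map t ↦ t_𝓛(f + t·g) equals E_{X∈F_p^n}[g(X)·f^{∂𝓛}(X)]. -/

import Mathlib

/-!
Differentiating `∏ᵢ (f + t g)(Lᵢ X)` at `t = 0` gives `Σᵢ g(Lᵢ X) ∏_{j ≠ i} f(Lⱼ X)`. Each nonzero
`Lᵢ` is a surjective linear map `(F_p^n)^k → F_p^n`, so all of its fibres have the same size and
averaging over `X` is the same as averaging first over the fibre `{Lᵢ X = x}` and then over `x`;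
the inner average of `∏_{j ≠ i} f(Lⱼ X)` is `f^{(𝓛∖{Lᵢ})^{Lᵢ}}(x)`.
-/

open Filter Topology

noncomputable section

namespace Paper

/-- The average (expectation) of a complex-valued function over a finite type. -/
def expC {α : Type*} [Fintype α] (f : α → ℂ) : ℂ := (∑ x, f x) / (Fintype.card α : ℂ)

/-- The average (expectation) of a real-valued function over a finite type. -/
def expR {α : Type*} [Fintype α] (f : α → ℝ) : ℝ := (∑ x, f x) / (Fintype.card α : ℝ)

variable (p : ℕ) [NeZero p]

/-- `e_p(m) = exp(2 π i m / p)`. -/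
def ep (m : ZMod p) : ℂ :=
  Complex.exp (2 * (Real.pi : ℂ) * Complex.I * (m.val : ℂ) / (p : ℂ))

/-- The Gowers uniformity norm `‖f‖_{U^k}` of `f : F_p^n → ℂ`. -/
def gowersNorm (n k : ℕ) (f : (Fin n → ZMod p) → ℂ) : ℝ :=
  (norm (expC (fun xy : (Fin n → ZMod p) × (Fin k → Fin n → ZMod p) =>
      ∏ S : Finset (Fin k),
        (fun z => (starRingEnd ℂ) z)^[k - S.card] (f (xy.1 + ∑ i ∈ S, xy.2 i))))) ^
    (((2 : ℝ) ^ k)⁻¹)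

/-- Inner product `⟨f, g⟩ = 𝔼[f ⬝ conj g]`. -/
def inn (n : ℕ) (f g : (Fin n → ZMod p) → ℂ) : ℂ :=
  expC (fun x => f x * (starRingEnd ℂ) (g x))

/-- Correlation norm `‖f‖_{u(D)}` for a set `D` of complex-valued functions. -/
def uNormC (n : ℕ) (D : Set ((Fin n → ZMod p) → ℂ)) (f : (Fin n → ZMod p) → ℂ) : ℝ :=
  ⨆ g ∈ D, norm (inn p n f g)

/-- Correlation norm `‖f‖_{u(D)}` for a set `D` of `F_p`-valued functions. -/
def uNormF (n : ℕ) (D : Set ((Fin n → ZMod p) → ZMod p)) (f : (Fin n → ZMod p) → ℂ) : ℝ :=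
  ⨆ g ∈ D, norm (inn p n f (fun x => ep p (g x)))

/-- The bias of `f : F_p^n → F_p`. -/
def biasF (n : ℕ) (f : (Fin n → ZMod p) → ZMod p) : ℝ :=
  norm (expC (fun x => ep p (f x)))

/-- Evaluation of a linear form `L ∈ F_p^k` at `X ∈ (F_p^n)^k`. -/
def applyLF (n k : ℕ) (L : Fin k → ZMod p) (X : Fin k → Fin n → ZMod p) :
    Fin n → ZMod p := ∑ i, L i • X i

/-- `t_𝓛(f)` for a system of linear forms given as a tuple `L`. -/
def tL (n k m : ℕ) (L : Fin m → Fin k → ZMod p) (f : (Fin n → ZMod p) → ℂ) : ℂ :=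
  expC (fun X : Fin k → Fin n → ZMod p => ∏ i, f (applyLF p n k (L i) X))

/-- `t_𝓛(f)` for a real-valued function. -/
def tLR (n k m : ℕ) (L : Fin m → Fin k → ZMod p) (f : (Fin n → ZMod p) → ℝ) : ℝ :=
  expR (fun X : Fin k → Fin n → ZMod p => ∏ i, f (applyLF p n k (L i) X))

/-- `t_{𝓛,α}(f)`, the average with conjugations `α`. -/
def tLA (n k m : ℕ) (L : Fin m → Fin k → ZMod p) (α : Fin m → Bool)
    (f : (Fin n → ZMod p) → ℂ) : ℂ :=
  expC (fun X : Fin k → Fin n → ZMod p =>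
    ∏ i, if α i then (starRingEnd ℂ) (f (applyLF p n k (L i) X))
      else f (applyLF p n k (L i) X))

/-- `t*_{𝓛,β}(f)`, the average with coefficients `β ∈ F_p^m`. -/
def tLstar (n k m : ℕ) (L : Fin m → Fin k → ZMod p) (β : Fin m → ZMod p)
    (f : (Fin n → ZMod p) → ZMod p) : ℂ :=
  expC (fun X : Fin k → Fin n → ZMod p => ep p (∑ i, β i * f (applyLF p n k (L i) X)))

/-- A system of linear forms is homogeneous if, for uniform `X`, the joint distribution of
`(L₁(X),…,L_m(X))` is invariant under simultaneous translation by any constant `c`. -/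
def IsHomogeneous (k m : ℕ) (L : Fin m → Fin k → ZMod p) : Prop :=
  ∀ (n : ℕ) (c : Fin n → ZMod p) (y : Fin m → Fin n → ZMod p),
    {X : Fin k → Fin n → ZMod p | ∀ i, applyLF p n k (L i) X = y i}.ncard =
    {X : Fin k → Fin n → ZMod p | ∀ i, applyLF p n k (L i) X + c = y i}.ncard

/-- Cauchy–Schwarz complexity at most `s`. -/
def CSComplexityLE (k m : ℕ) (L : Fin m → Fin k → ZMod p) (s : ℕ) : Prop :=
  ∀ i : Fin m, ∃ φ : Fin m → Fin (s + 1), ∀ c : Fin (s + 1),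
    L i ∉ Submodule.span (ZMod p) (L '' {j | j ≠ i ∧ φ j = c})

/-- True complexity at most `d`. -/
def TrueComplexityLE (k m : ℕ) (L : Fin m → Fin k → ZMod p) (d : ℕ) : Prop :=
  ∀ ε : ℝ, 0 < ε → ∃ δ : ℝ, 0 < δ ∧ ∀ (n : ℕ) (f : (Fin n → ZMod p) → ℂ),
    (∀ x, norm (f x) ≤ 1) → gowersNorm p n (d + 1) f ≤ δ →
      norm (tL p n k m L f) ≤ ε

/-- True complexity exactly `d`. -/
def TrueComplexityEq (k m : ℕ) (L : Fin m → Fin k → ZMod p) (d : ℕ) : Prop :=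
  TrueComplexityLE p k m L d ∧ ∀ e, e < d → ¬ TrueComplexityLE p k m L e

/-- Iterated additive derivative of `P : F_p^n → F_p` in a list of directions. -/
def derivList (n : ℕ) :
    List (Fin n → ZMod p) → ((Fin n → ZMod p) → ZMod p) → ((Fin n → ZMod p) → ZMod p)
  | [], P => P
  | y :: ys, P => derivList n ys (fun x => P (x + y) - P x)

/-- `P` is a polynomial of degree at most `d`: all `(d+1)`-fold derivatives vanish. -/
def DegLE (n : ℕ) (P : (Fin n → ZMod p) → ZMod p) (d : ℕ) : Prop :=
  ∀ ys : List (Fin n → ZMod p), ys.length = d + 1 → derivList p n ys P = 0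

/-- `P` is a polynomial of degree exactly `d`. -/
def DegEq (n : ℕ) (P : (Fin n → ZMod p) → ZMod p) (d : ℕ) : Prop :=
  DegLE p n P d ∧ ∀ e, e < d → ¬ DegLE p n P e

/-- `rank(P) > r`: `P` cannot be written as a function of `r` polynomials of degree
at most `deg(P) − 1`. -/
def RankGT (n : ℕ) (P : (Fin n → ZMod p) → ZMod p) (r : ℕ) : Prop :=
  ∀ d : ℕ, DegEq p n P d →
    ¬ ∃ (Q : Fin r → (Fin n → ZMod p) → ZMod p) (Γ : (Fin r → ZMod p) → ZMod p),
      (∀ i, DegLE p n (Q i) (d - 1)) ∧ ∀ x, P x = Γ (fun i => Q i x)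

/-- `rank(P) ≥ r`. -/
def RankGE (n : ℕ) (P : (Fin n → ZMod p) → ZMod p) (r : ℕ) : Prop :=
  ∀ r' : ℕ, r' < r → RankGT p n P r'

/-- Extension of a function on `F_p^n` to `F_p^m` (`m ≥ n`) by ignoring the extra coordinates. -/
def extendFun {β : Type*} {n m : ℕ} (h : n ≤ m) (g : (Fin n → ZMod p) → β) :
    (Fin m → ZMod p) → β := fun x => g (fun i => x (Fin.castLE h i))

/-- (A1) Consistency for `F_p`-valued families. -/
def ConsistentF (D : ∀ n : ℕ, Set ((Fin n → ZMod p) → ZMod p)) : Prop :=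
  ∀ (n m : ℕ) (h : n ≤ m), ∀ g ∈ D n, extendFun p h g ∈ D m

/-- Consistency for unit-disc-valued families: `D_n ⊆ D_{n+1}`. -/
def ConsistentC (D : ∀ n : ℕ, Set ((Fin n → ZMod p) → ℂ)) : Prop :=
  ∀ n : ℕ, ∀ g ∈ D n, extendFun p (Nat.le_succ n) g ∈ D (n + 1)

/-- (A2) Affine invariance. -/
def AffineInvariant (D : ∀ n : ℕ, Set ((Fin n → ZMod p) → ZMod p)) : Prop :=
  ∀ n : ℕ, ∀ g ∈ D n,
    ∀ (T : (Fin n → ZMod p) ≃ₗ[ZMod p] (Fin n → ZMod p)) (c : Fin n → ZMod p),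
      (fun x => g (T x + c)) ∈ D n

/-- (A3) Sparsity: `|D_n| ≤ p^{ε p^n}` for every `ε > 0` and all large enough `n`. -/
def Sparse (D : ∀ n : ℕ, Set ((Fin n → ZMod p) → ZMod p)) : Prop :=
  ∀ ε : ℝ, 0 < ε → ∃ n₀ : ℕ, ∀ n, n₀ ≤ n →
    (Nat.card (D n) : ℝ) ≤ (p : ℝ) ^ (ε * (p : ℝ) ^ n)

/-- A proper dual family: consistent, affine invariant and sparse. -/
def ProperDual (D : ∀ n : ℕ, Set ((Fin n → ZMod p) → ZMod p)) : Prop :=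
  ConsistentF p D ∧ AffineInvariant p D ∧ Sparse p D

/-- The family `D` is correlation testable with `q` queries. -/
def CorrTestable (q : ℕ) (D : ∀ n : ℕ, Set ((Fin n → ZMod p) → ZMod p)) : Prop :=
  ∃ (Γ : (Fin q → ZMod p) → Bool) (μ : ∀ n : ℕ, (Fin q → Fin n → ZMod p) → ℝ),
    (∀ n x, 0 ≤ μ n x) ∧ (∀ n, ∑ x, μ n x = 1) ∧
    ∀ ε : ℝ, 0 < ε → ∃ (δ θm θp : ℝ) (n₀ : ℕ),
      0 < δ ∧ δ < ε ∧ 0 ≤ θm ∧ θm < θp ∧ θp ≤ 1 ∧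
      ∀ n, n₀ < n → ∀ f : (Fin n → ZMod p) → ZMod p,
        (ε ≤ uNormF p n (D n) (fun x => ep p (f x)) →
          θp ≤ ∑ x, μ n x * (if Γ (fun i => f (x i)) = true then 1 else 0)) ∧
        (uNormF p n (D n) (fun x => ep p (f x)) ≤ δ →
          (∑ x, μ n x * (if Γ (fun i => f (x i)) = true then 1 else 0)) ≤ θm)

/-- Strong correlation testability by linear systems with true complexity `d` and
Cauchy–Schwarz complexity `s`. -/
def StronglyCorrTestable (D : ∀ n : ℕ, Set ((Fin n → ZMod p) → ℂ))
    (d s : ℕ) : Prop :=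
  ∀ ε : ℝ, 0 < ε → ∃ (δ : ℝ) (n₀ ℓ : ℕ) (kk mm : Fin ℓ → ℕ)
      (L : ∀ i, Fin (mm i) → Fin (kk i) → ZMod p) (α : ∀ i, Fin (mm i) → Bool),
    0 < δ ∧ δ < ε ∧
    (∀ i, Function.Injective (L i)) ∧
    (∀ i, IsHomogeneous p (kk i) (mm i) (L i)) ∧
    (∀ i, TrueComplexityLE p (kk i) (mm i) (L i) d) ∧
    (∀ i, CSComplexityLE p (kk i) (mm i) (L i) s) ∧
    Disjoint
      (closure {v : Fin ℓ → ℂ | ∃ (n : ℕ) (f : (Fin n → ZMod p) → ℂ),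
        n₀ ≤ n ∧ (∀ x, norm (f x) ≤ 1) ∧ ε ≤ uNormC p n (D n) f ∧
        v = fun i => tLA p n (kk i) (mm i) (L i) (α i) f})
      (closure {v : Fin ℓ → ℂ | ∃ (n : ℕ) (f : (Fin n → ZMod p) → ℂ),
        n₀ ≤ n ∧ (∀ x, norm (f x) ≤ 1) ∧ uNormC p n (D n) f ≤ δ ∧
        v = fun i => tLA p n (kk i) (mm i) (L i) (α i) f})

/-- `k ∈ S(D)`: there are polynomials of degree exactly `k` and arbitrarily high rank
with noticeable correlation with `D`. -/
def memS (D : ∀ n : ℕ, Set ((Fin n → ZMod p) → ℂ)) (k : ℕ) : Prop :=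
  1 ≤ k ∧ ∀ r : ℕ → ℕ, Monotone r → ∃ n₀ a : ℕ, ∀ n, n₀ ≤ n →
    ∃ P : (Fin n → ZMod p) → ZMod p, DegEq p n P k ∧
      (1 : ℝ) / (a : ℝ) ≤ uNormC p n (D n) (fun x => ep p (P x)) ∧
      RankGT p n P (r a)

/-- `Γ x` is a probability distribution on `F_p` for every `x`. -/
def IsDist (n : ℕ) (Γ : (Fin n → ZMod p) → ZMod p → ℝ) : Prop :=
  (∀ x c, 0 ≤ Γ x c) ∧ ∀ x, ∑ c, Γ x c = 1

/-- `a_c(μ) = E_{z ∼ μ}[e_p(c z)]`. -/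
def aC (c : ZMod p) (μ : ZMod p → ℝ) : ℂ :=
  ∑ z : ZMod p, (μ z : ℂ) * ep p (c * z)

/-- `t*_{𝓛,β}(Γ)` for a distributional function `Γ`. -/
def tLstarDist (n k m : ℕ) (L : Fin m → Fin k → ZMod p) (β : Fin m → ZMod p)
    (Γ : (Fin n → ZMod p) → ZMod p → ℝ) : ℂ :=
  expC (fun X : Fin k → Fin n → ZMod p => ∏ i, aC p (β i) (Γ (applyLF p n k (L i) X)))

/-- The probability of sampling the function `F` from the distributional function `Γ`
(independently at each point). -/
def probFun (n : ℕ) (Γ : (Fin n → ZMod p) → ZMod p → ℝ)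
    (F : (Fin n → ZMod p) → ZMod p) : ℝ :=
  ∏ x, Γ x (F x)

/-- Conditional expectation of a distributional function w.r.t. the polynomial factor
defined by `P₁, …, P_C`. -/
def condExpDist (n C : ℕ) (P : Fin C → (Fin n → ZMod p) → ZMod p)
    (Γ : (Fin n → ZMod p) → ZMod p → ℝ) : (Fin n → ZMod p) → ZMod p → ℝ :=
  fun x c =>
    (∑ y ∈ Finset.univ.filter (fun y : Fin n → ZMod p => ∀ j, P j y = P j x), Γ y c) /
    ((Finset.univ.filter (fun y : Fin n → ZMod p => ∀ j, P j y = P j x)).card : ℝ)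

/-- Connectivity of a system of linear forms given as a tuple. -/
def ConnectedSystem (k m : ℕ) (L : Fin m → Fin k → ZMod p) : Prop :=
  ∀ S : Finset (Fin m), S.Nonempty → S ≠ Finset.univ →
    Submodule.span (ZMod p) (L '' ↑S) ⊓ Submodule.span (ZMod p) (L '' ↑(Sᶜ)) ≠ ⊥

/-- Isomorphism of two systems of linear forms (given as injective tuples):
a bijection preserving all linear relations, i.e. extending to an invertible linear map
between the spans. -/
def SystemsIso {k₁ m₁ k₂ m₂ : ℕ}
    (L₁ : Fin m₁ → Fin k₁ → ZMod p) (L₂ : Fin m₂ → Fin k₂ → ZMod p) : Prop :=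
  ∃ σ : Fin m₁ ≃ Fin m₂, ∀ c : Fin m₁ → ZMod p,
    (∑ i, c i • L₁ i) = 0 ↔ (∑ i, c i • L₂ (σ i)) = 0

/-- Connectivity of a system of linear forms given as a finite set. -/
def ConnectedFinset {k : ℕ} (𝓛 : Finset (Fin k → ZMod p)) : Prop :=
  ∀ S : Finset (Fin k → ZMod p), S ⊆ 𝓛 → S.Nonempty → S ≠ 𝓛 →
    Submodule.span (ZMod p) (S : Set (Fin k → ZMod p)) ⊓
      Submodule.span (ZMod p) ((𝓛 \ S : Finset (Fin k → ZMod p)) : Set (Fin k → ZMod p)) ≠ ⊥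

/-- Isomorphism of two systems of linear forms given as finite sets. -/
def FinsetIso {k₁ k₂ : ℕ}
    (A : Finset (Fin k₁ → ZMod p)) (B : Finset (Fin k₂ → ZMod p)) : Prop :=
  ∃ e : {x // x ∈ A} ≃ {x // x ∈ B}, ∀ c : {x // x ∈ A} → ZMod p,
    (∑ x : {x // x ∈ A}, c x • (x : Fin k₁ → ZMod p)) = 0 ↔
    (∑ x : {x // x ∈ A}, c x • ((e x : Fin k₂ → ZMod p))) = 0

/-- Isomorphism of two 1-flagged systems of linear forms: a relation-preserving bijection
whose linear extension carries one flag to the other. -/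
def FlaggedIso {k₁ k₂ : ℕ}
    (A : Finset (Fin k₁ → ZMod p)) (M₁ : Fin k₁ → ZMod p)
    (B : Finset (Fin k₂ → ZMod p)) (M₂ : Fin k₂ → ZMod p) : Prop :=
  ∃ e : {x // x ∈ A} ≃ {x // x ∈ B},
    (∀ c : {x // x ∈ A} → ZMod p,
      (∑ x : {x // x ∈ A}, c x • (x : Fin k₁ → ZMod p)) = 0 ↔
      (∑ x : {x // x ∈ A}, c x • ((e x : Fin k₂ → ZMod p))) = 0) ∧
    (∀ c : {x // x ∈ A} → ZMod p,
      (∑ x : {x // x ∈ A}, c x • (x : Fin k₁ → ZMod p)) = M₁ →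
      (∑ x : {x // x ∈ A}, c x • ((e x : Fin k₂ → ZMod p))) = M₂)

/-- The underlying (unflagged) system of the product of two 1-flagged systems,
relative to the chosen surjection `T`. -/
def productSystem {k₀ k₁ : ℕ}
    (𝓛₀ : Finset (Fin k₀ → ZMod p)) (𝓛₁ : Finset (Fin k₁ → ZMod p))
    (T : (Fin (k₀ + k₁) → ZMod p) →ₗ[ZMod p] (Fin (k₀ + k₁ - 1) → ZMod p)) :
    Finset (Fin (k₀ + k₁ - 1) → ZMod p) :=
  (𝓛₀.image (fun L => Fin.append L (0 : Fin k₁ → ZMod p)) ∪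
    𝓛₁.image (fun L => Fin.append (0 : Fin k₀ → ZMod p) L)).image (fun v => T v)

/-- `f^{(𝓛∖{Lᵢ})^{Lᵢ}}(x)`: conditional average of `∏_{j ≠ i} f(L_j(X))` given `Lᵢ(X) = x`. -/
def flagCondAvg (n k m : ℕ) (L : Fin m → Fin k → ZMod p) (i : Fin m)
    (f : (Fin n → ZMod p) → ℂ) (x : Fin n → ZMod p) : ℂ :=
  (∑ X ∈ Finset.univ.filter (fun X : Fin k → Fin n → ZMod p => applyLF p n k (L i) X = x),
      ∏ j ∈ Finset.univ.erase i, f (applyLF p n k (L j) X)) /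
  (((Finset.univ.filter
      (fun X : Fin k → Fin n → ZMod p => applyLF p n k (L i) X = x)).card : ℂ))

/-- `f^{∂𝓛}(x) = Σ_{L ∈ 𝓛} f^{(𝓛∖{L})^L}(x)`. -/
def partialL (n k m : ℕ) (L : Fin m → Fin k → ZMod p)
    (f : (Fin n → ZMod p) → ℂ) (x : Fin n → ZMod p) : ℂ :=
  ∑ i, flagCondAvg p n k m L i f x

/-- Real-valued version of `flagCondAvg`. -/
def flagCondAvgR (n k m : ℕ) (L : Fin m → Fin k → ZMod p) (i : Fin m)
    (f : (Fin n → ZMod p) → ℝ) (x : Fin n → ZMod p) : ℝ :=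
  (∑ X ∈ Finset.univ.filter (fun X : Fin k → Fin n → ZMod p => applyLF p n k (L i) X = x),
      ∏ j ∈ Finset.univ.erase i, f (applyLF p n k (L j) X)) /
  (((Finset.univ.filter
      (fun X : Fin k → Fin n → ZMod p => applyLF p n k (L i) X = x)).card : ℝ))

/-- Real-valued version of `partialL`. -/
def partialLR (n k m : ℕ) (L : Fin m → Fin k → ZMod p)
    (f : (Fin n → ZMod p) → ℝ) (x : Fin n → ZMod p) : ℝ :=
  ∑ i, flagCondAvgR p n k m L i f x

/-- `t_𝓛` viewed as a formal polynomial in the variables `{f(x) : x ∈ F_p^n}`. -/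
def tLPoly (n k m : ℕ) (L : Fin m → Fin k → ZMod p) :
    MvPolynomial (Fin n → ZMod p) ℂ :=
  MvPolynomial.C (((p : ℂ) ^ (n * k))⁻¹) *
    ∑ X : Fin k → Fin n → ZMod p, ∏ i, MvPolynomial.X (applyLF p n k (L i) X)

section Averages

open scoped Finset

variable {α β : Type*} [Fintype α] [Fintype β]

lemma expC_sum {ι : Type*} (s : Finset ι) (F : ι → α → ℂ) :
    expC (fun a => ∑ i ∈ s, F i a) = ∑ i ∈ s, expC (F i) := by
  simp only [expC, Finset.sum_comm (s := s), Finset.sum_div]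

lemma hasDerivAt_expC {F : α → ℝ → ℂ} {F' : α → ℂ} {t : ℝ}
    (hF : ∀ a, HasDerivAt (F a) (F' a) t) :
    HasDerivAt (fun t => expC (fun a => F a t)) (expC F') t :=
  (HasDerivAt.fun_sum fun a _ => hF a).div_const _

lemma expC_mul_comp_eq_expC_mul_condAvg [DecidableEq β] (φ : α → β)
    (hφ : ∀ b, #{a | φ a = b} * Fintype.card β = Fintype.card α) (F : α → ℂ) (G : β → ℂ) :
    expC (fun a => F a * G (φ a)) =
      expC (fun b => G b * ((∑ a with φ a = b, F a) / (#{a | φ a = b} : ℂ))) := by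
  have hfibre (b : β) : G b * ((∑ a with φ a = b, F a) / (#{a | φ a = b} : ℂ)) /
      Fintype.card β = (∑ a with φ a = b, F a * G (φ a)) / Fintype.card α := by
    rw [← hφ b, Nat.cast_mul, mul_div_assoc', div_div, Finset.mul_sum]
    congr 1
    refine Finset.sum_congr rfl fun a ha => ?_
    rw [(Finset.mem_filter.mp ha).2, mul_comm]
  symm
  rw [expC, expC, Finset.sum_div, Finset.sum_congr rfl fun b _ => hfibre b, ← Finset.sum_div,
    Finset.sum_fiberwise]

lemma card_fiber_mul_card_of_surjective {G H : Type*} [AddGroup G] [AddGroup H]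
    [Fintype G] [Fintype H] [DecidableEq H] (φ : G →+ H) (hφ : Function.Surjective φ) (y : H) :
    #{g | φ g = y} * Fintype.card H = Fintype.card G := by
  have hconst (z : H) : #{g | φ g = z} = #{g | φ g = y} :=
    AddMonoidHom.card_fiber_eq_of_mem_range φ (hφ z) (hφ y)
  calc #{g | φ g = y} * Fintype.card H = ∑ z : H, #{g | φ g = z} := by
        simp [hconst, mul_comm]
    _ = Fintype.card G :=
        (Finset.card_eq_sum_card_fiberwise fun _ _ => Finset.mem_univ _).symm

end Averages

lemma hasDerivAt_prod_add_ofReal_mul {ι : Type*} [DecidableEq ι] (s : Finset ι) (a b : ι → ℂ) :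
    HasDerivAt (fun t : ℝ => ∏ i ∈ s, (a i + t * b i))
      (∑ i ∈ s, (∏ j ∈ s.erase i, a j) * b i) 0 := by
  have hline (i : ι) : HasDerivAt (fun t : ℝ => a i + t * b i) (b i) 0 := by
    simpa using ((hasDerivAt_id (0 : ℝ)).ofReal_comp.mul_const (b i)).const_add (a i)
  simpa [smul_eq_mul] using HasDerivAt.fun_finsetProd (u := s) fun i _ => hline i

omit [NeZero p] in
def applyLFHom (n k : ℕ) (ℓ : Fin k → ZMod p) : (Fin k → Fin n → ZMod p) →+ (Fin n → ZMod p) where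
  toFun := applyLF p n k ℓ
  map_zero' := by simp [applyLF]
  map_add' X Y := by simp [applyLF, smul_add, Finset.sum_add_distrib]

omit [NeZero p] in
lemma applyLF_surjective (hp : p.Prime) (n k : ℕ) {ℓ : Fin k → ZMod p} (hℓ : ℓ ≠ 0) :
    Function.Surjective (applyLF p n k ℓ) := by
  have := Fact.mk hp
  obtain ⟨j, hj⟩ := Function.ne_iff.mp hℓ
  intro x
  refine ⟨Pi.single j ((ℓ j)⁻¹ • x), ?_⟩
  rw [applyLF, Finset.sum_eq_single j (fun i _ hi => by simp [hi]) (by simp)]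
  simp [smul_smul, mul_inv_cancel₀ hj]

theorem statement18_general (p n k m : ℕ) [NeZero p] (hp : p.Prime)
    (L : Fin m → Fin k → ZMod p) (hnz : ∀ i, L i ≠ 0)
    (f g : (Fin n → ZMod p) → ℂ) :
    HasDerivAt (fun t : ℝ => tL p n k m L (fun x => f x + (t : ℂ) * g x))
      (expC (fun x => g x * partialL p n k m L f x)) 0 := by
  have hfibre (i : Fin m) := card_fiber_mul_card_of_surjective (applyLFHom p n k (L i))
    (applyLF_surjective p hp n k (hnz i))
  have hcond (i : Fin m) :
      expC (fun X => (∏ j ∈ Finset.univ.erase i, f (applyLF p n k (L j) X)) *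
          g (applyLF p n k (L i) X)) =
        expC (fun x => g x * flagCondAvg p n k m L i f x) :=
    expC_mul_comp_eq_expC_mul_condAvg (applyLF p n k (L i)) (hfibre i) _ g
  refine (hasDerivAt_expC fun X : Fin k → Fin n → ZMod p =>
    hasDerivAt_prod_add_ofReal_mul Finset.univ (fun i => f (applyLF p n k (L i) X))
      (fun i => g (applyLF p n k (L i) X))).congr_deriv ?_
  simp only [partialL, Finset.mul_sum, expC_sum, hcond]

/-- Lemma 6.9: derivative of `t_𝓛` along a perturbation.
For `f, g : F_p^n → ℂ` and a system `𝓛` of (nonzero) linear forms, the derivative at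
`t = 0` of `t ↦ t_𝓛(f + t·g)` equals `E_X[g(X) · f^{∂𝓛}(X)]`. -/
theorem statement18 (p n k m : ℕ) [NeZero p] (hp : p.Prime)
    (L : Fin m → Fin k → ZMod p) (hinj : Function.Injective L) (hnz : ∀ i, L i ≠ 0)
    (f g : (Fin n → ZMod p) → ℂ) :
    HasDerivAt (fun t : ℝ => tL p n k m L (fun x => f x + (t : ℂ) * g x))
      (expC (fun x => g x * partialL p n k m L f x)) 0 :=
  statement18_general p n k m hp L hnz f g

end Paper
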